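/- arXiv:2012.09926 — 2 statements merged into one kernel-verified Lean document; each statement's English description precedes it below -/
import Mathlib

section
/- A partition of n ≥ 1 is join-irreducible in the dominance lattice if and only if it has one of the following four forms (m, l, s ≥ 1): (A) (k,…,k) with m copies of k, k ≥ 2; (B) m copies of k followed by l copies of k−1, k ≥ 2; (C) m copies of k followed by l copies of 1, k ≥ 3; (D) m copies of k+2, then l copies of k+1, then s copies of 1, k ≥ 2. -/
def IsPartition (n : ℕ) (a : ℕ → ℕ) : Prop :=
  (∀ i j, i ≤ j → a j ≤ a i) ∧ (∑ i ∈ Finset.range n, a i = n) ∧ (∀ i, n ≤ i → a i = 0)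

def Dom (a b : ℕ → ℕ) : Prop :=
  ∀ j, ∑ i ∈ Finset.range j, a i ≤ ∑ i ∈ Finset.range j, b i

def IsSupOf (n : ℕ) (a b c : ℕ → ℕ) : Prop :=
  IsPartition n c ∧ Dom a c ∧ Dom b c ∧
    ∀ d, IsPartition n d → Dom a d → Dom b d → Dom c d

def IsInfOf (n : ℕ) (a b c : ℕ → ℕ) : Prop :=
  IsPartition n c ∧ Dom c a ∧ Dom c b ∧
    ∀ d, IsPartition n d → Dom d a → Dom d b → Dom d c

/-- The minimum partition (1,1,…,1) of n. -/
def ones (n : ℕ) : ℕ → ℕ := fun i => if i < n then 1 else 0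

/-- A partition of n is join-irreducible in the dominance lattice: it is not
the minimum and whenever it is the join of two partitions it equals one of them. -/
def JoinIrr (n : ℕ) (a : ℕ → ℕ) : Prop :=
  IsPartition n a ∧ a ≠ ones n ∧
    ∀ b c, IsPartition n b → IsPartition n c → IsSupOf n b c a → a = b ∨ a = c

/-
Dominance is read off the partial sums `psum`. Moving one box of `a` from row `r` down to row
`s` (`moveBox`) lowers exactly the partial sums at the indices in `(r, s]` by one. If `a` admits
two such moves whose ranges overlap at most at a drop of exactly one, `a` is the join of the two
moved partitions. So a join-irreducible partition has no drop of two or more onto a row of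
length at least two, and no drop of exactly one onto a nonempty row after an earlier drop; this
leaves the shapes A–D. Conversely, each shape has a move `(r, s)` such that for `j ∈ (r, s]` the
rows above `j` differ by at most one and row `j` has at most one box. A sequence whose terms
differ by at most one is dominance-minimal for its sum, so every partition strictly below `a`
has strictly smaller partial sums on `(r, s]`, i.e. lies below the moved partition, and `a` is
not the join of two partitions strictly below it.
-/

def psum (a : ℕ → ℕ) (j : ℕ) : ℕ := ∑ i ∈ Finset.range j, a i

theorem psum_succ (a : ℕ → ℕ) (j : ℕ) : psum a (j + 1) = psum a j + a j :=
  Finset.sum_range_succ a j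

theorem psum_add_sum_Ico (a : ℕ → ℕ) {i j : ℕ} (h : i ≤ j) :
    psum a i + ∑ t ∈ Finset.Ico i j, a t = psum a j :=
  Finset.sum_range_add_sum_Ico a h

section

variable {n r s : ℕ} {a b : ℕ → ℕ}

theorem IsPartition.antitone (ha : IsPartition n a) : Antitone a :=
  fun _ _ h => ha.1 _ _ h

theorem IsPartition.psum_of_le (ha : IsPartition n a) {j : ℕ} (hj : n ≤ j) : psum a j = n := by
  rw [← psum_add_sum_Ico a hj, Finset.sum_eq_zero fun i hi => ha.2.2 i (Finset.mem_Ico.1 hi).1]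
  exact ha.2.1

theorem IsPartition.eq_ones (ha : IsPartition n a) (h : a 0 ≤ 1) : a = ones n := by
  have hle : ∀ i, a i ≤ 1 := fun i => (ha.antitone (Nat.zero_le i)).trans h
  have hsum : ∑ i ∈ Finset.range n, a i = ∑ _i ∈ Finset.range n, 1 := by simp [ha.2.1]
  funext i
  unfold ones
  split_ifs with hi
  · exact (Finset.sum_eq_sum_iff_of_le fun i _ => hle i).1 hsum i (Finset.mem_range.2 hi)
  · exact ha.2.2 i (not_lt.1 hi)

theorem eqOn_Ico_of_dom (hb : Antitone b) (hba : Dom b a) {lo hi : ℕ}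
    (hbal : ∀ i t, lo ≤ i → i < hi → lo ≤ t → t < hi → a i ≤ a t + 1)
    (hlo : psum b lo = psum a lo) (hhi : psum b hi = psum a hi) :
    ∀ i, lo ≤ i → i < hi → b i = a i := by
  intro i hloi hihi
  have hge : ∀ i ∈ Finset.Ico lo hi, a i ≤ b i := by
    intro i hi'
    rw [Finset.mem_Ico] at hi'
    by_contra! hlt
    -- on `[i, hi)` the sequence `b` stays below `a`, so `b` would overtake `a` at `i`
    have hlt' : ∑ t ∈ Finset.Ico i hi, b t < ∑ t ∈ Finset.Ico i hi, a t := by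
      refine Finset.sum_lt_sum (fun t ht => ?_) ⟨i, Finset.mem_Ico.2 ⟨le_rfl, hi'.2⟩, hlt⟩
      rw [Finset.mem_Ico] at ht
      have := hb ht.1
      have := hbal i t hi'.1 hi'.2 (hi'.1.trans ht.1) ht.2
      omega
    have := psum_add_sum_Ico a hi'.2.le
    have := psum_add_sum_Ico b hi'.2.le
    have : psum b i ≤ psum a i := hba i
    omega
  have hsum : ∑ t ∈ Finset.Ico lo hi, a t = ∑ t ∈ Finset.Ico lo hi, b t := by
    have := psum_add_sum_Ico a (hloi.trans hihi.le)
    have := psum_add_sum_Ico b (hloi.trans hihi.le)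
    omega
  exact ((Finset.sum_eq_sum_iff_of_le hge).1 hsum i (Finset.mem_Ico.2 ⟨hloi, hihi⟩)).symm

theorem eq_of_dom_of_psum_eq (ha : IsPartition n a) (hb : IsPartition n b) (hba : Dom b a)
    {j : ℕ} (hj : psum b j = psum a j) (haj : a j ≤ 1)
    (hbal : ∀ i t, i < j → t < j → a i ≤ a t + 1) : b = a := by
  funext i
  rcases lt_or_ge i j with hij | hij
  · exact eqOn_Ico_of_dom hb.antitone hba (fun i t _ hi _ ht => hbal i t hi ht) rfl hj i
      (Nat.zero_le i) hij
  rcases lt_or_ge i (j + n) with hin | hin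
  · refine eqOn_Ico_of_dom hb.antitone hba (fun i t hi _ _ _ => ?_) hj ?_ i hij hin
    · exact (ha.antitone hi).trans (haj.trans (Nat.le_add_left 1 _))
    · rw [ha.psum_of_le (Nat.le_add_left n j), hb.psum_of_le (Nat.le_add_left n j)]
  · rw [ha.2.2 i (by omega), hb.2.2 i (by omega)]

theorem psum_le_of_neighbors {d : ℕ → ℕ} (hd : Antitone d) {t : ℕ}
    (h₀ : psum a t ≤ psum d t) (h₂ : psum a (t + 2) ≤ psum d (t + 2))
    (hat : a t = a (t + 1) + 1) : psum a (t + 1) ≤ psum d (t + 1) := by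
  have := hd (Nat.le_add_right t 1)
  simp only [psum_succ] at h₂ ⊢
  omega

def moveBox (a : ℕ → ℕ) (r s : ℕ) : ℕ → ℕ :=
  fun i => a i - (if i = r then 1 else 0) + (if i = s then 1 else 0)

/-- The conditions under which moving the last box of row `r` to the end of row `s` keeps the
rows weakly decreasing. -/
structure IsBoxMove (a : ℕ → ℕ) (r s : ℕ) : Prop where
  lt : r < s
  corner : a (r + 1) < a r
  addable : a s < a (s - 1)
  adjacent : r + 1 = s → a s + 2 ≤ a r

theorem psum_moveBox (h : 0 < a r) (j : ℕ) :
    psum (moveBox a r s) j + (if r < j then 1 else 0) = psum a j + (if s < j then 1 else 0) := by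
  have hpt : ∀ i ∈ Finset.range j, moveBox a r s i + (if i = r then 1 else 0)
      = a i + (if i = s then 1 else 0) := by
    intro i _
    unfold moveBox
    split_ifs <;> subst_vars <;> omega
  have := Finset.sum_congr rfl hpt
  simpa only [psum, Finset.sum_add_distrib, Finset.sum_ite_eq', Finset.mem_range] using this

theorem moveBox_ne (h : 0 < a r) (hrs : r ≠ s) : moveBox a r s ≠ a := fun he => by
  have := congrFun he r
  simp only [moveBox, if_neg hrs, if_true] at this
  omega

theorem dom_moveBox (h : 0 < a r) (hrs : r < s) : Dom (moveBox a r s) a := fun j => by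
  have := psum_moveBox h j (s := s)
  show psum _ j ≤ psum a j
  split_ifs at this <;> omega

namespace IsBoxMove

variable (mv : IsBoxMove a r s)
include mv

theorem pos : 0 < a r := (Nat.zero_le _).trans_lt mv.corner

theorem two_le (ha : Antitone a) : 2 ≤ a r := by
  rcases (Nat.succ_le_of_lt mv.lt).eq_or_lt with hs | hs
  · exact (Nat.le_add_left 2 _).trans (mv.adjacent hs)
  · have := ha (show r + 1 ≤ s - 1 by omega)
    have := mv.corner
    have := mv.addable
    omega

theorem lt_of_isPartition (ha : IsPartition n a) : s < n := by
  by_contra! hns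
  -- all rows above `s` are nonempty and row `r` has two boxes, so `a` has more than `s` boxes
  have hsum : ∑ _i ∈ Finset.range s, 1 < psum a s := by
    refine Finset.sum_lt_sum (fun i hi => ?_) ⟨r, Finset.mem_range.2 mv.lt, mv.two_le ha.antitone⟩
    have := ha.antitone (show i ≤ s - 1 by simp at hi; omega)
    have := mv.addable
    omega
  simp only [Finset.sum_const, Finset.card_range, smul_eq_mul, mul_one, ha.psum_of_le hns] at hsum
  omega

theorem isPartition_moveBox (ha : IsPartition n a) : IsPartition n (moveBox a r s) := by
  have hsn := mv.lt_of_isPartition ha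
  have hrs := mv.lt
  refine ⟨fun i j hij => antitone_nat_of_succ_le (fun i => ?_) hij, ?_, fun i hi => ?_⟩
  · have := ha.antitone (Nat.le_add_right i 1)
    have : i = r → a (i + 1) < a i := fun h => h ▸ mv.corner
    have : i + 1 = s → a (i + 1) < a i := fun h => by
      simpa [← h] using mv.addable
    have : i = r → i + 1 = s → a (i + 1) + 2 ≤ a i := fun h h' => by
      subst h h'
      exact mv.adjacent rfl
    unfold moveBox
    split_ifs <;> omega
  · have := psum_moveBox mv.pos n (s := s)
    rw [ha.psum_of_le le_rfl] at this
    show psum _ n = n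
    split_ifs at this <;> omega
  · simp only [moveBox, ha.2.2 i hi]
    split_ifs <;> omega

end IsBoxMove

theorem isSupOf_moveBox (ha : IsPartition n a) {r' s' : ℕ} (mv : IsBoxMove a r s)
    (mv' : IsBoxMove a r' s') (hs : s ≤ r' + 1) (hadj : s = r' + 1 → a r' = a s + 1) :
    IsSupOf n (moveBox a r s) (moveBox a r' s') a := by
  refine ⟨ha, dom_moveBox mv.pos mv.lt, dom_moveBox mv'.pos mv'.lt, fun d hd hd₁ hd₂ j => ?_⟩
  show psum a j ≤ psum d j
  have e := psum_moveBox mv.pos j (s := s)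
  have e' := psum_moveBox mv'.pos j (s := s')
  have : psum (moveBox a r s) j ≤ psum d j := hd₁ j
  have : psum (moveBox a r' s') j ≤ psum d j := hd₂ j
  have := mv.lt
  have := mv'.lt
  -- the ranges `(r, s]` and `(r', s']` can only share `j = s = r' + 1`, where the drop of one
  -- in `a` lets the neighbouring indices force the inequality
  by_cases hj : j = r' + 1 ∧ s = r' + 1
  · obtain ⟨rfl, rfl⟩ := hj
    refine psum_le_of_neighbors hd.antitone ?_ ?_ (hadj rfl)
    · have e' := psum_moveBox mv'.pos r' (s := s')
      have : psum (moveBox a r' s') r' ≤ psum d r' := hd₂ r'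
      split_ifs at e' <;> omega
    · have e := psum_moveBox mv.pos (r' + 2) (s := r' + 1)
      have : psum (moveBox a r (r' + 1)) (r' + 2) ≤ psum d (r' + 2) := hd₁ (r' + 2)
      split_ifs at e <;> omega
  · split_ifs at e e' <;> omega

theorem JoinIrr.false_of_isBoxMove (hJ : JoinIrr n a) {r' s' : ℕ} (mv : IsBoxMove a r s)
    (mv' : IsBoxMove a r' s') (hs : s ≤ r' + 1) (hadj : s = r' + 1 → a r' = a s + 1) : False := by
  obtain ⟨ha, -, hirr⟩ := hJ
  rcases hirr _ _ (mv.isPartition_moveBox ha) (mv'.isPartition_moveBox ha)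
    (isSupOf_moveBox ha mv mv' hs hadj) with h | h
  · exact moveBox_ne mv.pos mv.lt.ne h.symm
  · exact moveBox_ne mv'.pos mv'.lt.ne h.symm

theorem exists_block (ha : Antitone a) {N p : ℕ} (h : a N < a p) :
    ∃ q, p ≤ q ∧ (∀ i, p ≤ i → i ≤ q → a i = a p) ∧ a (q + 1) < a p := by
  have hex : ∃ q, a (q + 1) < a p := ⟨N, (ha (Nat.le_succ N)).trans_lt h⟩
  have hpq : p ≤ Nat.find hex := by
    by_contra! hq
    exact (Nat.find_spec hex).not_ge (ha hq)
  refine ⟨Nat.find hex, hpq, fun i hpi hiq => ?_, Nat.find_spec hex⟩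
  rcases hpi.eq_or_lt with rfl | hpi
  · rfl
  obtain ⟨i, rfl⟩ : ∃ i', i = i' + 1 := ⟨i - 1, by omega⟩
  have := Nat.find_min hex (show i < Nat.find hex by omega)
  have := ha hpi.le
  omega

theorem exists_isBoxMove_of_corner (ha : Antitone a) {N p : ℕ} (hN : a N = 0)
    (hc : a (p + 1) < a p) (h1 : 0 < a (p + 1)) : ∃ s, IsBoxMove a p s := by
  have hex : ∃ s, a s = 0 := ⟨N, hN⟩
  have hps : p + 1 < Nat.find hex := by
    by_contra! hs
    have := ha hs
    have := Nat.find_spec hex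
    omega
  refine ⟨Nat.find hex, hps.trans' (Nat.lt_succ_self p), hc, ?_, fun h => absurd h hps.ne⟩
  rw [Nat.find_spec hex]
  exact Nat.pos_of_ne_zero (Nat.find_min hex (by omega))

theorem exists_isBoxMove_of_two_le (ha : Antitone a) {N p : ℕ} (hN : a N = 0) (h2 : 2 ≤ a p) :
    ∃ r s, p ≤ r ∧ IsBoxMove a r s := by
  obtain ⟨q, hpq, hblk, hdrop⟩ := exists_block ha (show a N < a p by omega)
  have hq := hblk q hpq le_rfl
  rcases Nat.eq_zero_or_pos (a (q + 1)) with h0 | h0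
  · exact ⟨q, q + 1, hpq, Nat.lt_succ_self q, by omega, by simp; omega, fun _ => by omega⟩
  · obtain ⟨s, hs⟩ := exists_isBoxMove_of_corner ha hN (by omega) h0
    exact ⟨q, s, hpq, hs⟩

theorem JoinIrr.two_le_apply_zero (hJ : JoinIrr n a) : 2 ≤ a 0 := by
  by_contra! h
  exact hJ.2.1 (hJ.1.eq_ones (by omega))

theorem JoinIrr.le_one_of_big_drop (hJ : JoinIrr n a) {p : ℕ} (hp : a (p + 1) + 2 ≤ a p) :
    a (p + 1) ≤ 1 := by
  by_contra! h
  obtain ⟨r', s', hr', mv'⟩ := exists_isBoxMove_of_two_le hJ.1.antitone (hJ.1.2.2 n le_rfl) h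
  have mv : IsBoxMove a p (p + 1) := ⟨Nat.lt_succ_self p, by omega, by simp; omega, fun _ => hp⟩
  exact hJ.false_of_isBoxMove mv mv' (by omega) (by omega)

theorem JoinIrr.eq_zero_of_unit_drop (hJ : JoinIrr n a) {m p : ℕ} (hmp : m < p)
    (hm : a (m + 1) < a m) (hp : a p = a (p + 1) + 1) : a (p + 1) = 0 := by
  by_contra! h
  have ha := hJ.1.antitone
  obtain ⟨s', mv'⟩ :=
    exists_isBoxMove_of_corner ha (hJ.1.2.2 n le_rfl) (p := p) (by omega) (by omega)
  have mv : IsBoxMove a m (p + 1) := ⟨by omega, hm, by simp; omega, fun h => by omega⟩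
  exact hJ.false_of_isBoxMove mv mv' le_rfl fun _ => hp

theorem dom_moveBox_of_dom (ha : IsPartition n a) (mv : IsBoxMove a r s)
    (hrigid : ∀ j, r < j → j ≤ s → a j ≤ 1 ∧ ∀ i t, i < j → t < j → a i ≤ a t + 1)
    (hb : IsPartition n b) (hba : Dom b a) (hne : b ≠ a) : Dom b (moveBox a r s) := fun j => by
  show psum b j ≤ psum (moveBox a r s) j
  have e := psum_moveBox mv.pos j (s := s)
  have : psum b j ≤ psum a j := hba j
  by_cases hj : r < j ∧ j ≤ s
  · have hlt : psum b j ≠ psum a j := fun h =>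
      hne (eq_of_dom_of_psum_eq ha hb hba h (hrigid j hj.1 hj.2).1 (hrigid j hj.1 hj.2).2)
    split_ifs at e <;> omega
  · split_ifs at e <;> omega

theorem joinIrr_of_isBoxMove (ha : IsPartition n a) (mv : IsBoxMove a r s)
    (hrigid : ∀ j, r < j → j ≤ s → a j ≤ 1 ∧ ∀ i t, i < j → t < j → a i ≤ a t + 1) :
    JoinIrr n a := by
  refine ⟨ha, fun h => ?_, fun b c hb hc hsup => ?_⟩
  · have := congrFun h r
    have := mv.two_le ha.antitone
    unfold ones at *
    split_ifs at * <;> omega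
  · by_contra! hne
    have hdom := hsup.2.2.2 _ (mv.isPartition_moveBox ha)
      (dom_moveBox_of_dom ha mv hrigid hb hsup.2.1 hne.1.symm)
      (dom_moveBox_of_dom ha mv hrigid hc hsup.2.2.1 hne.2.symm)
    have e := psum_moveBox mv.pos s (s := s)
    have : psum a s ≤ psum (moveBox a r s) s := hdom s
    have := mv.lt
    split_ifs at e <;> omega

def BrylawskiShape (a : ℕ → ℕ) : Prop :=
  (∃ k m, 2 ≤ k ∧ 1 ≤ m ∧ ∀ i, a i = if i < m then k else 0) ∨
  (∃ k m l, 2 ≤ k ∧ 1 ≤ m ∧ 1 ≤ l ∧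
    ∀ i, a i = if i < m then k else if i < m + l then k - 1 else 0) ∨
  (∃ k m l, 3 ≤ k ∧ 1 ≤ m ∧ 1 ≤ l ∧
    ∀ i, a i = if i < m then k else if i < m + l then 1 else 0) ∨
  (∃ k m l s, 2 ≤ k ∧ 1 ≤ m ∧ 1 ≤ l ∧ 1 ≤ s ∧
    ∀ i, a i = if i < m then k + 2 else if i < m + l then k + 1
      else if i < m + l + s then 1 else 0)

theorem joinIrr_of_brylawskiShape (ha : IsPartition n a) (h : BrylawskiShape a) :
    JoinIrr n a := by
  rcases h with ⟨k, m, hk, hm, hf⟩ | ⟨k, m, l, hk, hm, hl, hf⟩ | ⟨k, m, l, hk, hm, hl, hf⟩ |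
    ⟨k, m, l, s, hk, hm, hl, hs, hf⟩
  · refine joinIrr_of_isBoxMove ha (r := m - 1) (s := m) ⟨by omega, ?_, ?_, fun _ => ?_⟩
      fun j _ _ => ⟨?_, fun i t _ _ => ?_⟩ <;> simp only [hf] <;> split_ifs <;> omega
  · rcases (show k = 2 ∨ 3 ≤ k by omega) with rfl | hk
    · refine joinIrr_of_isBoxMove ha (r := m - 1) (s := m + l) ⟨by omega, ?_, ?_, fun _ => ?_⟩
        fun j _ _ => ⟨?_, fun i t _ _ => ?_⟩ <;> simp only [hf] <;> split_ifs <;> omega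
    · refine joinIrr_of_isBoxMove ha (r := m + l - 1) (s := m + l) ⟨by omega, ?_, ?_, fun _ => ?_⟩
        fun j _ _ => ⟨?_, fun i t _ _ => ?_⟩ <;> simp only [hf] <;> split_ifs <;> omega
  · refine joinIrr_of_isBoxMove ha (r := m - 1) (s := m) ⟨by omega, ?_, ?_, fun _ => ?_⟩
      fun j _ _ => ⟨?_, fun i t _ _ => ?_⟩ <;> simp only [hf] <;> split_ifs <;> omega
  · refine joinIrr_of_isBoxMove ha (r := m + l - 1) (s := m + l) ⟨by omega, ?_, ?_, fun _ => ?_⟩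
      fun j _ _ => ⟨?_, fun i t _ _ => ?_⟩ <;> simp only [hf] <;> split_ifs <;> omega

theorem brylawskiShape_of_drops (ha : Antitone a) {N : ℕ} (hN : a N = 0) (h0 : 2 ≤ a 0)
    (hbig : ∀ p, a (p + 1) + 2 ≤ a p → a (p + 1) ≤ 1)
    (hunit : ∀ m p, m < p → a (m + 1) < a m → a p = a (p + 1) + 1 → a (p + 1) = 0) :
    BrylawskiShape a := by
  have hzero : ∀ p i, a p = 0 → p ≤ i → a i = 0 := fun p i hp hi =>
    Nat.eq_zero_of_le_zero (hp ▸ ha hi)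
  obtain ⟨q₁, -, blk₁, drop₁⟩ := exists_block ha (p := 0) (show a N < a 0 by omega)
  have hq₁ := blk₁ q₁ (Nat.zero_le _) le_rfl
  rcases Nat.eq_zero_or_pos (a (q₁ + 1)) with h₁ | h₁
  · refine Or.inl ⟨a 0, q₁ + 1, h0, by omega, fun i => ?_⟩
    have := blk₁ i (Nat.zero_le i)
    have := hzero _ i h₁
    split_ifs <;> omega
  obtain ⟨q₂, hq₂, blk₂, drop₂⟩ := exists_block ha (p := q₁ + 1) (show a N < a (q₁ + 1) by omega)
  have hq₂' := blk₂ q₂ hq₂ le_rfl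
  by_cases hbig₁ : a (q₁ + 1) + 2 ≤ a q₁
  · have := hbig q₁ hbig₁
    refine Or.inr (Or.inr (Or.inl ⟨a 0, q₁ + 1, q₂ - q₁, by omega, by omega, by omega,
      fun i => ?_⟩))
    have := blk₁ i (Nat.zero_le i)
    have := blk₂ i
    have := hzero (q₂ + 1) i (by omega)
    split_ifs <;> omega
  rcases Nat.eq_zero_or_pos (a (q₂ + 1)) with h₂ | h₂
  · refine Or.inr (Or.inl ⟨a 0, q₁ + 1, q₂ - q₁, by omega, by omega, by omega, fun i => ?_⟩)
    have := blk₁ i (Nat.zero_le i)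
    have := blk₂ i
    have := hzero _ i h₂
    split_ifs <;> omega
  have hbig₂ : a (q₂ + 1) + 2 ≤ a q₂ := by
    have := hunit q₁ q₂ (by omega) (by omega)
    omega
  have := hbig q₂ hbig₂
  obtain ⟨q₃, hq₃, blk₃, drop₃⟩ := exists_block ha (p := q₂ + 1) (show a N < a (q₂ + 1) by omega)
  refine Or.inr (Or.inr (Or.inr ⟨a (q₁ + 1) - 1, q₁ + 1, q₂ - q₁, q₃ - q₂, by omega, by omega,
    by omega, by omega, fun i => ?_⟩))
  have := blk₁ i (Nat.zero_le i)
  have := blk₂ i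
  have := blk₃ i
  have := hzero (q₃ + 1) i (by omega)
  split_ifs <;> omega

theorem JoinIrr.brylawskiShape (hJ : JoinIrr n a) : BrylawskiShape a :=
  brylawskiShape_of_drops hJ.1.antitone (hJ.1.2.2 n le_rfl) hJ.two_le_apply_zero
    (fun _ => hJ.le_one_of_big_drop) (fun _ _ => hJ.eq_zero_of_unit_drop)

end

theorem stmt9_general (n : ℕ) :
    ∀ a, IsPartition n a →
      (JoinIrr n a ↔
        -- Type A: m copies of k, k ≥ 2
        (∃ k m, 2 ≤ k ∧ 1 ≤ m ∧ ∀ i, a i = if i < m then k else 0) ∨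
        -- Type B: m copies of k then l copies of k−1, k ≥ 2
        (∃ k m l, 2 ≤ k ∧ 1 ≤ m ∧ 1 ≤ l ∧
          ∀ i, a i = if i < m then k else if i < m + l then k - 1 else 0) ∨
        -- Type C: m copies of k then l copies of 1, k ≥ 3
        (∃ k m l, 3 ≤ k ∧ 1 ≤ m ∧ 1 ≤ l ∧
          ∀ i, a i = if i < m then k else if i < m + l then 1 else 0) ∨
        -- Type D: m copies of k+2, l copies of k+1, s copies of 1, k ≥ 2
        (∃ k m l s, 2 ≤ k ∧ 1 ≤ m ∧ 1 ≤ l ∧ 1 ≤ s ∧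
          ∀ i, a i = if i < m then k + 2 else if i < m + l then k + 1
            else if i < m + l + s then 1 else 0)) :=
  fun _ ha => ⟨JoinIrr.brylawskiShape, joinIrr_of_brylawskiShape ha⟩

/-- Brylawski's four types of join-irreducible partitions. -/
theorem stmt9 (n : ℕ) (hn : 1 ≤ n) :
    ∀ a, IsPartition n a →
      (JoinIrr n a ↔
        -- Type A: m copies of k, k ≥ 2
        (∃ k m, 2 ≤ k ∧ 1 ≤ m ∧ ∀ i, a i = if i < m then k else 0) ∨
        -- Type B: m copies of k then l copies of k−1, k ≥ 2
        (∃ k m l, 2 ≤ k ∧ 1 ≤ m ∧ 1 ≤ l ∧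
          ∀ i, a i = if i < m then k else if i < m + l then k - 1 else 0) ∨
        -- Type C: m copies of k then l copies of 1, k ≥ 3
        (∃ k m l, 3 ≤ k ∧ 1 ≤ m ∧ 1 ≤ l ∧
          ∀ i, a i = if i < m then k else if i < m + l then 1 else 0) ∨
        -- Type D: m copies of k+2, l copies of k+1, s copies of 1, k ≥ 2
        (∃ k m l s, 2 ≤ k ∧ 1 ≤ m ∧ 1 ≤ l ∧ 1 ≤ s ∧
          ∀ i, a i = if i < m then k + 2 else if i < m + l then k + 1
            else if i < m + l + s then 1 else 0)) :=
  stmt9_general n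
end

section
/- The number of join-irreducible elements of the dominance lattice of partitions of n+1 equals n(⌊n/3⌋ + 1) − (3/2)⌊n/3⌋² − (1/2)⌊n/3⌋ for all n ≥ 1. -/
open Finset

def partialSum (a : ℕ → ℕ) (j : ℕ) : ℕ := ∑ i ∈ range j, a i

lemma partialSum_succ (a : ℕ → ℕ) (j : ℕ) : partialSum a (j + 1) = partialSum a j + a j :=
  sum_range_succ a j

lemma eq_of_partialSum_eq {a b : ℕ → ℕ} (h : ∀ j, partialSum a j = partialSum b j) : a = b :=
  funext fun i => by
    have := h (i + 1)
    rw [partialSum_succ, partialSum_succ, h i] at this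
    omega

lemma partialSum_eq_of_forall_ge_eq_zero {a : ℕ → ℕ} {m n : ℕ} (h : ∀ i, m ≤ i → a i = 0)
    (hmn : m ≤ n) : partialSum a n = partialSum a m :=
  (sum_subset (range_subset_range.2 hmn) fun i _ hi => h i (by simpa using hi)).symm

lemma partialSum_le_mul {a : ℕ → ℕ} (ha : Antitone a) (j : ℕ) : partialSum a j ≤ j * a 0 := by
  simpa [partialSum] using sum_le_card_nsmul (range j) a (a 0) fun i _ => ha (Nat.zero_le i)

lemma mul_le_partialSum {a : ℕ → ℕ} (ha : Antitone a) {k v : ℕ} (h : v ≤ a k) :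
    (k + 1) * v ≤ partialSum a (k + 1) := by
  simpa [partialSum] using card_nsmul_le_sum (range (k + 1)) a v fun i hi =>
    h.trans (ha (Nat.lt_succ_iff.1 (mem_range.1 hi)))

namespace IsPartition

variable {M : ℕ} {a : ℕ → ℕ}

lemma antitone_s14 (ha : IsPartition M a) : Antitone a := ha.1

lemma partialSum_self (ha : IsPartition M a) : partialSum a M = M := ha.2.1

lemma eq_zero_of_le (ha : IsPartition M a) {i : ℕ} (hi : M ≤ i) : a i = 0 := ha.2.2 i hi

lemma partialSum_of_eq_zero (ha : IsPartition M a) {k : ℕ} (hk : a k = 0) :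
    partialSum a k = M := by
  have hzero : ∀ i, k ≤ i → a i = 0 := fun i hi => Nat.le_zero.1 (hk ▸ ha.antitone_s14 hi)
  rw [← partialSum_eq_of_forall_ge_eq_zero hzero (Nat.le_add_right k M),
    partialSum_eq_of_forall_ge_eq_zero (fun _ => ha.eq_zero_of_le) (Nat.le_add_left M k),
    ha.partialSum_self]

lemma partialSum_le (ha : IsPartition M a) (j : ℕ) : partialSum a j ≤ M := by
  calc partialSum a j ≤ partialSum a (j + M) :=
        sum_le_sum_of_subset (range_subset_range.2 (Nat.le_add_right j M))
    _ = M := by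
      rw [partialSum_eq_of_forall_ge_eq_zero (fun _ => ha.eq_zero_of_le) (Nat.le_add_left M j),
        ha.partialSum_self]

end IsPartition

section Rigidity

variable {M p : ℕ} {a x : ℕ → ℕ}

lemma partialSum_eq_of_succ_eq (hx : Antitone x) (ha : Antitone a) (hdom : Dom x a) {j : ℕ}
    (hj : a 0 ≤ a j + 1) (h : partialSum x (j + 1) = partialSum a (j + 1)) :
    partialSum x j = partialSum a j := by
  by_contra hne
  have hlt : partialSum x j < partialSum a j := lt_of_le_of_ne (hdom j) hne
  rw [partialSum_succ, partialSum_succ] at h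
  have hxj : a j + 1 ≤ x j := by omega
  have hlow := mul_le_partialSum hx hxj
  have hup : partialSum a j ≤ j * (a j + 1) :=
    (partialSum_le_mul ha j).trans (Nat.mul_le_mul_left j hj)
  rw [partialSum_succ, add_one_mul] at hlow
  omega

lemma partialSum_succ_eq_of_eq (hx : IsPartition M x) (ha : IsPartition M a) (hdom : Dom x a)
    {j : ℕ} (hj : a j ≤ 1) (h : partialSum x j = partialSum a j) :
    partialSum x (j + 1) = partialSum a (j + 1) := by
  have hle : partialSum x (j + 1) ≤ partialSum a (j + 1) := hdom (j + 1)
  have haM := ha.partialSum_le (j + 1)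
  simp only [partialSum_succ] at hle haM ⊢
  rcases Nat.eq_zero_or_pos (x j) with h0 | hpos
  · have := hx.partialSum_of_eq_zero h0
    omega
  · omega

/-- Tightness at `p` spreads downwards: a strict gap at `j < p` would force `x j > a j`, and then
the antitone `x` would overtake `a`, whose first `j + 1` parts are at most `a j + 1`, at `j + 1`.
It spreads upwards because the parts of `a` there are at most one. -/
theorem IsPartition.eq_of_dom_of_partialSum_eq (hx : IsPartition M x) (ha : IsPartition M a)
    (hdom : Dom x a) (hlow : ∀ i < p, a 0 ≤ a i + 1) (hhigh : ∀ i, p ≤ i → a i ≤ 1)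
    (hp : partialSum x p = partialSum a p) : x = a := by
  refine eq_of_partialSum_eq fun j => ?_
  rcases le_total j p with hjp | hpj
  · exact Nat.decreasingInduction (motive := fun j _ => partialSum x j = partialSum a j)
      (fun k hk ih => partialSum_eq_of_succ_eq hx.antitone_s14 ha.antitone_s14 hdom (hlow k hk) ih)
      hp hjp
  · exact Nat.le_induction (P := fun j _ => partialSum x j = partialSum a j) hp
      (fun k hk ih => partialSum_succ_eq_of_eq hx ha hdom (hhigh k hk) ih) j hpj

end Rigidity

section BoxMoves

variable {M p q : ℕ} {a b : ℕ → ℕ}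

/-- The partial sums of `b` are those of `a` lowered by one exactly on `[p, q]`: for
`1 ≤ p ≤ q` this says that `b` arises from `a` by moving one box from row `p - 1` to row `q`. -/
def IsBoxMove_s14 (a : ℕ → ℕ) (p q : ℕ) (b : ℕ → ℕ) : Prop :=
  ∀ j, partialSum b j + (if p ≤ j ∧ j ≤ q then 1 else 0) = partialSum a j

lemma IsBoxMove_s14.dom (h : IsBoxMove_s14 a p q b) : Dom b a := fun j => by
  have := h j
  change partialSum b j ≤ partialSum a j
  omega

lemma IsBoxMove_s14.ne (h : IsBoxMove_s14 a p q b) (hpq : p ≤ q) : b ≠ a := by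
  rintro rfl
  have := h p
  rw [if_pos ⟨le_rfl, hpq⟩] at this
  omega

lemma IsPartition.exists_isBoxMove (ha : IsPartition M a) (hp : a p < a (p - 1))
    (hq : a q < a (q - 1)) (hpq : p ≤ q) (hsingle : p = q → a q + 2 ≤ a (q - 1)) :
    ∃ b, IsPartition M b ∧ IsBoxMove_s14 a p q b := by
  obtain ⟨P, rfl⟩ := Nat.exists_eq_add_one_of_ne_zero (by rintro rfl; exact lt_irrefl _ hp : p ≠ 0)
  obtain ⟨Q, rfl⟩ := Nat.exists_eq_add_one_of_ne_zero (by omega : q ≠ 0)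
  simp only [Nat.add_sub_cancel, add_left_inj] at hp hq hsingle
  set b : ℕ → ℕ := fun i => if i = P then a P - 1 else if i = Q + 1 then a (Q + 1) + 1 else a i
  have hmove : IsBoxMove_s14 a (P + 1) (Q + 1) b := by
    intro j
    induction j with
    | zero => simp [partialSum]
    | succ j ih =>
      rw [partialSum_succ, partialSum_succ, ← ih]
      simp only [b]
      split_ifs <;> subst_vars <;> omega
  have hanti : Antitone b := antitone_nat_of_succ_le fun i => by
    have hi := ha.antitone_s14 (Nat.le_add_right i 1)
    simp only [b, add_left_inj]
    split_ifs <;> subst_vars <;> omega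
  have hqM : Q + 1 < M := by
    -- the first `Q + 2` parts of `b` are positive and sum to at most `M`
    have hlow := mul_le_partialSum hanti (le_refl (b (Q + 1)))
    have hbq : b (Q + 1) = a (Q + 1) + 1 := by simp [b, show Q + 1 ≠ P by omega]
    have heq := hmove (Q + 1 + 1)
    rw [if_neg (by omega)] at heq
    have := ha.partialSum_le (Q + 1 + 1)
    rw [hbq] at hlow
    nlinarith
  refine ⟨b, ⟨hanti, ?_, fun i hi => ?_⟩, hmove⟩
  · have := hmove M
    rwa [if_neg (by omega), add_zero, ha.partialSum_self] at this
  · simp only [b]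
    rw [if_neg (by omega), if_neg (by omega)]
    exact ha.eq_zero_of_le hi

lemma isSupOf_of_isBoxMove_of_lt {p' q' : ℕ} {c : ℕ → ℕ} (ha : IsPartition M a)
    (hb : IsBoxMove_s14 a p q b) (hc : IsBoxMove_s14 a p' q' c) (hqp' : q < p') : IsSupOf M b c a := by
  refine ⟨ha, hb.dom, hc.dom, fun d _ hbd hcd j => ?_⟩
  have h₁ := hb j
  have h₂ := hc j
  have : partialSum b j ≤ partialSum d j := hbd j
  have : partialSum c j ≤ partialSum d j := hcd j
  change partialSum a j ≤ partialSum d j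
  split_ifs at h₁ h₂ <;> omega

lemma isSupOf_of_isBoxMove_of_eq {q' : ℕ} {c : ℕ → ℕ} (ha : IsPartition M a)
    (hb : IsBoxMove_s14 a p q b) (hc : IsBoxMove_s14 a q q' c) (hpq : p < q) (hqq' : q < q')
    (hstep : a (q - 1) = a q + 1) : IsSupOf M b c a := by
  refine ⟨ha, hb.dom, hc.dom, fun d hd hbd hcd j => ?_⟩
  have h₁ := hb j
  have h₂ := hc j
  have : partialSum b j ≤ partialSum d j := hbd j
  have : partialSum c j ≤ partialSum d j := hcd j
  change partialSum a j ≤ partialSum d j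
  by_cases hj : j = q
  -- at `q`, concavity of the partial sums of `d` closes the gap, since `a` drops by one there
  · obtain ⟨k, rfl⟩ : ∃ k, q = k + 1 := ⟨q - 1, by omega⟩
    subst hj
    simp only [Nat.add_sub_cancel] at hstep
    have hbelow := hc k
    have habove := hb (k + 1 + 1)
    rw [if_neg (by omega)] at hbelow habove
    have : partialSum c k ≤ partialSum d k := hcd k
    have : partialSum b (k + 1 + 1) ≤ partialSum d (k + 1 + 1) := hbd (k + 1 + 1)
    have hconc := hd.antitone_s14 (Nat.le_add_right k 1)
    simp only [partialSum_succ] at *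
    omega
  · split_ifs at h₁ h₂ <;> omega

lemma joinIrr_of_isBoxMove_s14 {w : ℕ → ℕ} (ha : IsPartition M a) (hne : a ≠ ones M)
    (hw : IsPartition M w) (hmove : IsBoxMove_s14 a p q w) (hpq : p ≤ q)
    (hlow : ∀ i < q, a 0 ≤ a i + 1) (hhigh : ∀ i, p ≤ i → a i ≤ 1) : JoinIrr M a := by
  have below : ∀ x, IsPartition M x → Dom x a → x ≠ a → Dom x w := by
    intro x hx hxa hxne j
    have hj := hmove j
    have : partialSum x j ≤ partialSum a j := hxa j
    change partialSum x j ≤ partialSum w j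
    split_ifs at hj with hpj
    · by_contra hlt
      exact hxne (hx.eq_of_dom_of_partialSum_eq (p := j) ha hxa (fun i hi => hlow i (by omega))
        (fun i hi => hhigh i (by omega)) (by omega))
    · omega
  refine ⟨ha, hne, fun b c hb hc hsup => ?_⟩
  by_contra! h
  have hdom := hsup.2.2.2 w hw (below b hb hsup.2.1 (Ne.symm h.1))
    (below c hc hsup.2.2.1 (Ne.symm h.2)) p
  have hp := hmove p
  rw [if_pos ⟨le_rfl, hpq⟩] at hp
  change partialSum a p ≤ partialSum w p at hdom
  omega

end BoxMoves

section Shapes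

def shape (c r s t : ℕ) : ℕ → ℕ := fun i =>
  if i < r then c + 1 else if i < r + s then c else if i < r + s + t then 1 else 0

def IsShapeParam (M c r s t : ℕ) : Prop :=
  1 ≤ c ∧ 1 ≤ r ∧ (c = 1 → s = 0) ∧ (c = 2 → s = 0 ∨ t = 0) ∧ M = (c + 1) * r + c * s + t

variable {M c r s t : ℕ}

lemma shape_antitone (hc : 1 ≤ c) : Antitone (shape c r s t) := fun i j hij => by
  simp only [shape]
  split_ifs <;> omega

lemma partialSum_shape : partialSum (shape c r s t) (r + s + t) = (c + 1) * r + c * s + t := by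
  rw [partialSum, sum_range_add, sum_range_add]
  have h₁ : ∀ i ∈ range r, shape c r s t i = c + 1 := fun i hi => by
    simp [shape, mem_range.1 hi]
  have h₂ : ∀ i ∈ range s, shape c r s t (r + i) = c := fun i hi => by
    simp [shape, mem_range.1 hi]
  have h₃ : ∀ i ∈ range t, shape c r s t (r + s + i) = 1 := fun i hi => by
    have := mem_range.1 hi
    simp only [shape]
    split_ifs <;> omega
  rw [sum_congr rfl h₁, sum_congr rfl h₂, sum_congr rfl h₃]
  simp [mul_comm]

lemma isPartition_shape (hc : 1 ≤ c) (hM : M = (c + 1) * r + c * s + t) :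
    IsPartition M (shape c r s t) := by
  have hzero : ∀ i, r + s + t ≤ i → shape c r s t i = 0 := fun i hi => by
    simp only [shape]
    split_ifs <;> omega
  have hle : r + s + t ≤ M := by subst hM; nlinarith
  refine ⟨shape_antitone hc, ?_, fun i hi => hzero i (by omega)⟩
  change partialSum (shape c r s t) M = M
  rw [partialSum_eq_of_forall_ge_eq_zero hzero hle, partialSum_shape, hM]

lemma shape_ne_ones (hc : 1 ≤ c) (hr : 1 ≤ r) : shape c r s t ≠ ones M := fun h => by
  have h0 := congrFun h 0
  simp only [shape, ones] at h0
  split_ifs at h0 <;> omega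

theorem joinIrr_shape (h : IsShapeParam M c r s t) : JoinIrr M (shape c r s t) := by
  obtain ⟨hc, hr, h₁, h₂, hM⟩ := h
  have ha := isPartition_shape hc hM
  have hne : shape c r s t ≠ ones M := shape_ne_ones hc hr
  rcases eq_or_lt_of_le hc with rfl | hc₂
  · obtain rfl := h₁ rfl
    refine (ha.exists_isBoxMove (p := r) (q := r + t) ?_ ?_ (by omega) ?_).elim
      fun w ⟨hw, hmove⟩ => joinIrr_of_isBoxMove_s14 ha hne hw hmove (by omega) ?_ ?_
    all_goals intros; simp only [shape]; split_ifs <;> omega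
  · refine (ha.exists_isBoxMove (p := r + s) (q := r + s) ?_ ?_ le_rfl ?_).elim
      fun w ⟨hw, hmove⟩ => joinIrr_of_isBoxMove_s14 ha hne hw hmove le_rfl ?_ ?_
    all_goals intros; simp only [shape]; split_ifs <;> omega

end Shapes

section Converse

variable {M : ℕ} {a : ℕ → ℕ}

lemma IsPartition.exists_block_end (ha : IsPartition M a) (k : ℕ) (hk : 1 ≤ a k) :
    ∃ p, k < p ∧ (∀ i, k ≤ i → i < p → a i = a k) ∧ a p < a k := by
  classical
  have hex : ∃ j, a j < a k := ⟨M + k, by rw [ha.eq_zero_of_le (by omega)]; omega⟩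
  refine ⟨Nat.find hex, ?_, fun i hki hi => ?_, Nat.find_spec hex⟩
  · by_contra! h
    exact absurd (ha.antitone_s14 h) (not_le.2 (Nat.find_spec hex))
  · exact le_antisymm (ha.antitone_s14 hki) (not_lt.1 (Nat.find_min hex hi))

lemma IsPartition.exists_ones_block (ha : IsPartition M a) (m : ℕ) (hm : a m ≤ 1) :
    ∃ t, (∀ i, m ≤ i → i < m + t → a i = 1) ∧ a (m + t) = 0 := by
  rcases Nat.eq_zero_or_pos (a m) with h0 | hpos
  · exact ⟨0, fun i _ _ => by omega, h0⟩
  · obtain ⟨p, hmp, hblock, hdrop⟩ := ha.exists_block_end m hpos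
    refine ⟨p - m, fun i h₁ h₂ => by rw [hblock i h₁ (by omega)]; omega, ?_⟩
    rw [Nat.add_sub_cancel' hmp.le]
    omega

lemma IsPartition.exists_eq_shape (ha : IsPartition M a) {c r s : ℕ}
    (h₁ : ∀ i < r, a i = c + 1) (h₂ : ∀ i, r ≤ i → i < r + s → a i = c) (h₃ : a (r + s) ≤ 1) :
    ∃ t, a = shape c r s t ∧ M = (c + 1) * r + c * s + t ∧ (t = 0 ↔ a (r + s) = 0) := by
  obtain ⟨t, hones, hzero⟩ := ha.exists_ones_block (r + s) h₃
  have hshape : a = shape c r s t := funext fun i => by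
    simp only [shape]
    split_ifs with g₁ g₂ g₃
    · exact h₁ i g₁
    · exact h₂ i (by omega) g₂
    · exact hones i (by omega) g₃
    · exact Nat.le_zero.1 (hzero ▸ ha.antitone_s14 (by omega))
  refine ⟨t, hshape, ?_, ⟨fun ht => by simpa [ht] using hzero, fun h0 => ?_⟩⟩
  · rw [← ha.partialSum_of_eq_zero hzero, hshape, partialSum_shape]
  · by_contra ht
    have := hones (r + s) le_rfl (by omega)
    omega

def IsProperJoin (M : ℕ) (a : ℕ → ℕ) : Prop :=
  ∃ b c, IsPartition M b ∧ IsPartition M c ∧ b ≠ a ∧ c ≠ a ∧ IsSupOf M b c a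

lemma JoinIrr.not_isProperJoin (h : JoinIrr M a) : ¬ IsProperJoin M a := by
  rintro ⟨b, c, hb, hc, hba, hca, hsup⟩
  rcases h.2.2 b c hb hc hsup with h | h
  exacts [hba h.symm, hca h.symm]

lemma IsPartition.isProperJoin_of_isBoxMove (ha : IsPartition M a) {b : ℕ → ℕ} {p q p' : ℕ}
    (hb : IsPartition M b) (hmb : IsBoxMove_s14 a p q b) (hpq : p ≤ q) (hqp' : q < p')
    (hp' : a p' < a (p' - 1)) (h2 : 2 ≤ a (p' - 1)) : IsProperJoin M a := by
  obtain ⟨q', c, hpq', hc, hmc⟩ : ∃ q' c, p' ≤ q' ∧ IsPartition M c ∧ IsBoxMove_s14 a p' q' c := by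
    by_cases hgap : a p' + 2 ≤ a (p' - 1)
    · obtain ⟨c, hc, hmc⟩ := ha.exists_isBoxMove hp' hp' le_rfl fun _ => hgap
      exact ⟨p', c, le_rfl, hc, hmc⟩
    · obtain ⟨q', hpq', hblock, hdrop⟩ := ha.exists_block_end p' (by omega)
      have hlast : a (q' - 1) = a p' := hblock _ (by omega) (by omega)
      obtain ⟨c, hc, hmc⟩ := ha.exists_isBoxMove hp' (by omega) hpq'.le (by omega)
      exact ⟨q', c, hpq'.le, hc, hmc⟩
  exact ⟨b, c, hb, hc, hmb.ne hpq, hmc.ne hpq', isSupOf_of_isBoxMove_of_lt ha hmb hmc hqp'⟩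

theorem IsPartition.exists_shape_or_isProperJoin (ha : IsPartition M a) (h2 : 2 ≤ a 0) :
    (∃ c r s t, IsShapeParam M c r s t ∧ a = shape c r s t) ∨ IsProperJoin M a := by
  obtain ⟨p₁, hp₁, hblock₁, hdrop₁⟩ := ha.exists_block_end 0 (by omega)
  have hlast₁ : a (p₁ - 1) = a 0 := hblock₁ _ (by omega) (by omega)
  by_cases hv : a p₁ ≤ 1
  -- `a = (c+1)^r 1^t`
  · obtain ⟨t, hshape, hM, -⟩ := ha.exists_eq_shape (c := a 0 - 1) (r := p₁) (s := 0)
      (fun i hi => by rw [hblock₁ i (by omega) hi]; omega) (fun i _ _ => by omega) hv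
    exact .inl ⟨_, _, _, _, ⟨by omega, by omega, fun _ => rfl, fun _ => .inl rfl, hM⟩, hshape⟩
  obtain ⟨p₂, hp₂, hblock₂, hdrop₂⟩ := ha.exists_block_end p₁ (by omega)
  have hlast₂ : a (p₂ - 1) = a p₁ := hblock₂ _ (by omega) (by omega)
  by_cases hgap : a p₁ + 2 ≤ a 0
  · obtain ⟨b, hb, hmb⟩ := ha.exists_isBoxMove (p := p₁) (q := p₁) (by omega) (by omega) le_rfl
      (fun _ => by omega)
    exact .inr (ha.isProperJoin_of_isBoxMove hb hmb le_rfl hp₂ (by omega) (by omega))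
  by_cases hsmall : a p₂ = 0 ∨ a p₂ = 1 ∧ a p₁ ≠ 2
  -- `a = (c+1)^r c^s 1^t` with `c ≥ 2`
  · obtain ⟨t, hshape, hM, ht⟩ := ha.exists_eq_shape (c := a p₁) (r := p₁) (s := p₂ - p₁)
      (fun i hi => by rw [hblock₁ i (by omega) hi]; omega) (fun i h h' => hblock₂ i h (by omega))
      (by rw [Nat.add_sub_cancel' hp₂.le]; omega)
    rw [Nat.add_sub_cancel' hp₂.le] at ht
    exact .inl ⟨_, _, _, _, ⟨by omega, by omega, fun _ => by omega, fun _ => .inr (ht.2 (by omega)),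
      hM⟩, hshape⟩
  obtain ⟨b, hb, hmb⟩ := ha.exists_isBoxMove (p := p₁) (q := p₂) (by omega) (by omega) hp₂.le
    (by omega)
  obtain ⟨p₃, hp₃, hblock₃, hdrop₃⟩ := ha.exists_block_end p₂ (by omega)
  have hlast₃ : a (p₃ - 1) = a p₂ := hblock₃ _ (by omega) (by omega)
  by_cases hw : 2 ≤ a p₂
  · exact .inr (ha.isProperJoin_of_isBoxMove hb hmb hp₂.le hp₃ (by omega) (by omega))
  -- `a = 3^r 2^s 1^t` with `r, s, t ≥ 1`
  · obtain ⟨c, hc, hmc⟩ := ha.exists_isBoxMove (p := p₂) (q := p₃) (by omega) (by omega) hp₃.le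
      (by omega)
    exact .inr ⟨b, c, hb, hc, hmb.ne hp₂.le, hmc.ne hp₃.le,
      isSupOf_of_isBoxMove_of_eq ha hmb hmc hp₂ hp₃ (by omega)⟩

end Converse

section Characterization

variable {M : ℕ} {a : ℕ → ℕ}

lemma IsPartition.eq_ones_of_le_one (ha : IsPartition M a) (h : a 0 ≤ 1) : a = ones M :=
  funext fun i => by
    simp only [ones]
    split_ifs with hi
    · by_contra hne
      have h0 : a i = 0 := by
        have := ha.antitone_s14 (Nat.zero_le i)
        omega
      have hM := ha.partialSum_of_eq_zero h0
      have := partialSum_le_mul ha.antitone_s14 i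
      nlinarith
    · exact ha.eq_zero_of_le (by omega)

theorem joinIrr_iff : JoinIrr M a ↔ ∃ c r s t, IsShapeParam M c r s t ∧ a = shape c r s t := by
  refine ⟨fun h => ?_, fun ⟨c, r, s, t, hparam, ha⟩ => ha ▸ joinIrr_shape hparam⟩
  have h2 : 2 ≤ a 0 := by
    by_contra! h'
    exact h.2.1 (h.1.eq_ones_of_le_one (by omega))
  exact (h.1.exists_shape_or_isProperJoin h2).resolve_right h.not_isProperJoin

lemma shape_inj {c r s t c' r' s' t' : ℕ} (hc : 1 ≤ c) (hr : 1 ≤ r) (hs : c = 1 → s = 0)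
    (hr' : 1 ≤ r') (hs' : c' = 1 → s' = 0) (h : shape c r s t = shape c' r' s' t') :
    c = c' ∧ r = r' ∧ s = s' ∧ t = t' := by
  have hv : ∀ i, shape c r s t i = shape c' r' s' t' i := congrFun h
  simp only [shape] at hv
  obtain rfl : c = c' := by
    have := hv 0
    split_ifs at this <;> omega
  obtain rfl : r = r' := eq_of_forall_lt_iff fun i => by
    have := hv i
    split_ifs at this <;> omega
  obtain rfl : s = s' := by
    rcases eq_or_lt_of_le hc with rfl | hc₂
    · rw [hs rfl, hs' rfl]
    · exact eq_of_forall_lt_iff fun i => by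
        have := hv (r + i)
        split_ifs at this <;> omega
  obtain rfl : t = t' := eq_of_forall_lt_iff fun i => by
    have := hv (r + s + i)
    split_ifs at this <;> omega
  exact ⟨rfl, rfl, rfl, rfl⟩

end Characterization

section Counting

/-- A shape `(c+1)^r c^s 1^t` is recorded by `k = (c+1) r + c s`, the total size of its parts
other than the trailing ones, and `u = r + s`, the number of those parts. -/
def shapePairs (M : ℕ) : Finset (ℕ × ℕ) :=
  (Icc 1 M ×ˢ Icc 1 M).filter fun x => 2 * x.2 ≤ x.1 ∧ (x.1 = M ∨ 2 * x.2 = x.1 ∨ 3 * x.2 ≤ x.1)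

def shapeParams (M : ℕ) : Set (ℕ × ℕ × ℕ × ℕ) :=
  {x | IsShapeParam M x.1 x.2.1 x.2.2.1 x.2.2.2}

def toShapePair (x : ℕ × ℕ × ℕ × ℕ) : ℕ × ℕ :=
  ((x.1 + 1) * x.2.1 + x.1 * x.2.2.1, x.2.1 + x.2.2.1)

variable {M : ℕ}

lemma mem_shapeParams {c r s t : ℕ} : (c, r, s, t) ∈ shapeParams M ↔ IsShapeParam M c r s t :=
  Iff.rfl

lemma ncard_setOf_joinIrr : {a | JoinIrr M a}.ncard = (shapeParams M).ncard := by
  have himage : {a | JoinIrr M a} =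
      (fun x : ℕ × ℕ × ℕ × ℕ => shape x.1 x.2.1 x.2.2.1 x.2.2.2) '' shapeParams M := by
    ext a
    simp only [Set.mem_ofPred_eq, joinIrr_iff, Set.mem_image, shapeParams, Prod.exists]
    exact exists₄_congr fun c r s t => and_congr_right fun _ => eq_comm
  rw [himage]
  refine Set.InjOn.ncard_image ?_
  rintro ⟨c, r, s, t⟩ hx ⟨c', r', s', t'⟩ hx' h
  obtain ⟨hc, hr, hs, -⟩ := mem_shapeParams.1 hx
  obtain ⟨-, hr', hs', -⟩ := mem_shapeParams.1 hx'
  obtain ⟨rfl, rfl, rfl, rfl⟩ := shape_inj hc hr hs hr' hs' h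
  rfl

lemma div_eq_of_eq_mul_add {k c u r : ℕ} (h : k = c * u + r) (hr : 1 ≤ r) (hru : r ≤ u) :
    (k - 1) / u = c :=
  Nat.div_eq_of_lt_le (by omega) (by rw [add_one_mul]; omega)

lemma toShapePair_injOn : Set.InjOn toShapePair (shapeParams M) := by
  rintro ⟨c, r, s, t⟩ hx ⟨c', r', s', t'⟩ hx' h
  obtain ⟨-, hr, -, -, hM⟩ := mem_shapeParams.1 hx
  obtain ⟨-, hr', -, -, hM'⟩ := mem_shapeParams.1 hx'
  simp only [toShapePair, Prod.mk.injEq] at h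
  obtain ⟨hk, hu⟩ := h
  have e : ∀ c r s : ℕ, (c + 1) * r + c * s = c * (r + s) + r := fun _ _ _ => by ring
  have hdiv := div_eq_of_eq_mul_add (e c r s) hr (by omega)
  rw [hk, hu] at hdiv
  obtain rfl := hdiv.symm.trans (div_eq_of_eq_mul_add (e c' r' s') hr' (by omega))
  rw [e, e, hu] at hk
  obtain rfl : r = r' := by omega
  obtain rfl : s = s' := by omega
  obtain rfl : t = t' := by omega
  rfl

lemma mem_shapePairs {k u : ℕ} : (k, u) ∈ shapePairs M ↔
    (1 ≤ k ∧ k ≤ M) ∧ (1 ≤ u ∧ u ≤ M) ∧ 2 * u ≤ k ∧ (k = M ∨ 2 * u = k ∨ 3 * u ≤ k) := by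
  simp only [shapePairs, mem_filter, mem_product, mem_Icc]
  tauto

lemma toShapePair_mem_shapePairs {x : ℕ × ℕ × ℕ × ℕ} (hx : x ∈ shapeParams M) :
    toShapePair x ∈ shapePairs M := by
  obtain ⟨c, r, s, t⟩ := x
  obtain ⟨hc, hr, hs, hst, hM⟩ := mem_shapeParams.1 hx
  simp only [toShapePair, mem_shapePairs]
  rcases lt_trichotomy c 2 with hc₁ | rfl | hc₃
  · obtain rfl : c = 1 := by omega
    obtain rfl := hs rfl
    omega
  · omega
  · have := Nat.mul_le_mul_right r (show 4 ≤ c + 1 by omega)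
    have := Nat.mul_le_mul_right s (show 3 ≤ c by omega)
    omega

lemma exists_shapeParam_of_mem_shapePairs {k u : ℕ} (h : (k, u) ∈ shapePairs M) :
    ∃ x ∈ shapeParams M, toShapePair x = (k, u) := by
  obtain ⟨⟨hk, hkM⟩, ⟨hu, -⟩, h2u, hcase⟩ := mem_shapePairs.1 h
  have hdiv := Nat.div_add_mod (k - 1) u
  have hmod := Nat.mod_lt (k - 1) (show 0 < u by omega)
  set c := (k - 1) / u
  set r := (k - 1) % u + 1
  have hk' : (c + 1) * r + c * (u - r) = k := by
    have : c * (u - r) + c * r = u * c := by rw [← mul_add, Nat.sub_add_cancel (by omega), mul_comm]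
    have : (c + 1) * r = c * r + r := by ring
    omega
  refine ⟨(c, r, u - r, M - k),
    mem_shapeParams.2 ⟨?_, by omega, fun hc => ?_, fun hc => ?_, by omega⟩, ?_⟩
  · by_contra! hc
    rw [Nat.lt_one_iff.1 hc, mul_zero] at hdiv
    omega
  · rw [hc, mul_one] at hdiv
    omega
  · rw [hc] at hdiv
    omega
  · simp only [toShapePair, hk', Prod.mk.injEq, true_and]
    omega

lemma ncard_shapeParams : (shapeParams M).ncard = (shapePairs M).card := by
  have himage : toShapePair '' shapeParams M = shapePairs M := by
    ext ⟨k, u⟩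
    refine ⟨?_, exists_shapeParam_of_mem_shapePairs⟩
    rintro ⟨x, hx, hxku⟩
    exact hxku ▸ toShapePair_mem_shapePairs hx
  rw [← toShapePair_injOn.ncard_image, himage, Set.ncard_coe_finset]

lemma card_shapePairs (n : ℕ) : (shapePairs (n + 1)).card = n + ∑ k ∈ Icc 1 n, k / 3 := by
  have hsplit : (shapePairs (n + 1)).card = ∑ k ∈ Icc 1 (n + 1),
      ((Icc 1 (n + 1)).filter fun u => 2 * u ≤ k ∧ (k = n + 1 ∨ 2 * u = k ∨ 3 * u ≤ k)).card := by
    simp only [shapePairs, card_filter, sum_product]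
  have htop : ((Icc 1 (n + 1)).filter fun u =>
      2 * u ≤ n + 1 ∧ (n + 1 = n + 1 ∨ 2 * u = n + 1 ∨ 3 * u ≤ n + 1)).card = (n + 1) / 2 := by
    rw [show (Icc 1 (n + 1)).filter _ = Icc 1 ((n + 1) / 2) by
        ext u; simp only [mem_filter, mem_Icc, true_or, and_true]; omega, Nat.card_Icc]
    omega
  have hbelow : ∀ k ∈ Icc 1 n, ((Icc 1 (n + 1)).filter fun u =>
      2 * u ≤ k ∧ (k = n + 1 ∨ 2 * u = k ∨ 3 * u ≤ k)).card = k / 3 + if 2 ∣ k then 1 else 0 := by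
    intro k hk
    rw [mem_Icc] at hk
    split_ifs with h2
    · rw [show (Icc 1 (n + 1)).filter _ = insert (k / 2) (Icc 1 (k / 3)) by
          ext u; simp only [mem_filter, mem_Icc, mem_insert]; omega,
        card_insert_of_notMem (by simp only [mem_Icc]; omega), Nat.card_Icc]
      omega
    · rw [show (Icc 1 (n + 1)).filter _ = Icc 1 (k / 3) by
          ext u; simp only [mem_filter, mem_Icc]; omega, Nat.card_Icc]
      omega
  have heven : ∑ k ∈ Icc 1 n, (if 2 ∣ k then 1 else 0) = n / 2 := by
    rw [← card_filter, ← Nat.Ioc_filter_dvd_card_eq_div n 2, ← Icc_add_one_left_eq_Ioc]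
    rfl
  rw [hsplit, sum_Icc_succ_top (by omega), htop, sum_congr rfl hbelow, sum_add_distrib, heven]
  omega

lemma sum_Icc_div_three (n : ℕ) :
    2 * ∑ k ∈ Icc 1 n, k / 3 + 3 * (n / 3) ^ 2 + n / 3 = 2 * n * (n / 3) := by
  induction n with
  | zero => simp
  | succ n ih =>
    rw [sum_Icc_succ_top (by omega)]
    rcases Nat.lt_or_ge (n % 3) 2 with h | h
    · rw [show (n + 1) / 3 = n / 3 by omega]
      linarith
    · have hn : n = 3 * (n / 3) + 2 := by omega
      rw [show (n + 1) / 3 = n / 3 + 1 by omega]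
      nlinarith

end Counting

theorem stmt14_general (n : ℕ) :
    (Set.ncard {a : ℕ → ℕ | JoinIrr (n + 1) a} : ℚ) =
      (n : ℚ) * ((n / 3 : ℕ) + 1) - 3 / 2 * ((n / 3 : ℕ) : ℚ) ^ 2
        - 1 / 2 * ((n / 3 : ℕ) : ℚ) := by
  have hsum : 2 * ∑ k ∈ Icc 1 n, ((k / 3 : ℕ) : ℚ) + 3 * ((n / 3 : ℕ) : ℚ) ^ 2 + (n / 3 : ℕ) =
      2 * n * (n / 3 : ℕ) := by
    exact_mod_cast sum_Icc_div_three n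
  rw [ncard_setOf_joinIrr, ncard_shapeParams, card_shapePairs]
  push_cast
  linarith

/-- Closed formula: J(n+1) = n(⌊n/3⌋+1) − (3/2)⌊n/3⌋² − (1/2)⌊n/3⌋. -/
theorem stmt14 (n : ℕ) (hn : 1 ≤ n) :
    (Set.ncard {a : ℕ → ℕ | JoinIrr (n + 1) a} : ℚ) =
      (n : ℚ) * ((n / 3 : ℕ) + 1) - 3 / 2 * ((n / 3 : ℕ) : ℚ) ^ 2
        - 1 / 2 * ((n / 3 : ℕ) : ℚ) :=
  stmt14_general n
end
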